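/- arXiv:0808.0783 — 3 statements merged into one kernel-verified Lean document; each statement's English description precedes it below -/
import Mathlib

section
/- Let n ≥ 1, ν > 0, let α₁ ≥ 1/(1+ν) with n + 2α₁ − 2 > 0, let 0 < ε < 1, and set A₁ = (2α₁(1−ε)(n+2α₁−2))^{−1/(1+ν)} and b₁ = 2(n+2α₁−2)ε if α₁ ≤ 1, and A₁ = (2α₁(1−ε)n)^{−1/(1+ν)} and b₁ = 2εn if α₁ > 1. Define ψ₁(x,t) = A₁(1+|x|²+b₁t)^{α₁}. Then Δψ₁(x,t) − ψ₁(x,t)^{−ν} − ∂ψ₁/∂t(x,t) ≥ 0 for all (x,t) ∈ ℝⁿ × (0,∞); i.e., ψ₁ is a subsolution of u_t = Δu − u^{−ν} on ℝⁿ × (0,∞). -/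
/-!
Put `w = 1 + |x|² + b₁t ≥ 1` and `m = n + 2 min(α₁ - 1, 0)`. A direct computation gives
`Δψ₁ = 2A₁α₁ (n w^{α₁-1} + 2(α₁-1)|x|² w^{α₁-2}) ≥ 2A₁α₁ m w^{α₁-1}` (for `α₁ < 1` use `|x|² ≤ w`),
`∂ₜψ₁ = A₁α₁b₁ w^{α₁-1}`, and `ψ₁^{-ν} = A₁^{-ν} w^{-α₁ν} ≤ A₁^{-ν} w^{α₁-1}` since `α₁(1+ν) ≥ 1`.
The choice of `A₁` and `b₁` is precisely the balance `A₁^{-ν} + A₁α₁b₁ = 2A₁α₁m`.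
-/

open MeasureTheory Real Set Filter Topology Metric

noncomputable section

/-- Euclidean space `ℝⁿ`. -/
abbrev E (n : ℕ) := EuclideanSpace ℝ (Fin n)

/-- Second partial derivative `∂²f/∂xᵢ∂xⱼ` of `f : ℝⁿ → ℝ`. -/
def pd2 {n : ℕ} (f : E n → ℝ) (i j : Fin n) (x : E n) : ℝ :=
  fderiv ℝ (fun y => fderiv ℝ f y (EuclideanSpace.single j (1 : ℝ))) x
    (EuclideanSpace.single i (1 : ℝ))

/-- Spatial Laplacian of `f : ℝⁿ → ℝ`. -/
def lap {n : ℕ} (f : E n → ℝ) (x : E n) : ℝ := ∑ i, pd2 f i i x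

/-- `u = u(x,t)` is of class `C^{2,1}` on a set `S ⊆ ℝⁿ × ℝ`: `u`, `∂u/∂t` and
all first and second spatial derivatives are continuous on `S`. -/
structure IsC21 {n : ℕ} (S : Set (E n × ℝ)) (u : E n → ℝ → ℝ) : Prop where
  cont : ContinuousOn (fun p : E n × ℝ => u p.1 p.2) S
  cont_t : ContinuousOn (fun p : E n × ℝ => deriv (u p.1) p.2) S
  cont_x : ∀ i : Fin n, ContinuousOn
    (fun p : E n × ℝ =>
      fderiv ℝ (fun y => u y p.2) p.1 (EuclideanSpace.single i (1 : ℝ))) S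
  cont_xx : ∀ i j : Fin n, ContinuousOn
    (fun p : E n × ℝ => pd2 (fun y => u y p.2) i j p.1) S

lemma hasFDerivAt_const_mul_rpow_add_norm_sq {F : Type*} [NormedAddCommGroup F]
    [InnerProductSpace ℝ F] (A α : ℝ) {c : ℝ} (hc : 0 < c) (y : F) :
    HasFDerivAt (fun y : F => A * (c + ‖y‖ ^ 2) ^ α)
      (A • (α * (c + ‖y‖ ^ 2) ^ (α - 1)) • (2 : ℕ) • innerSL ℝ y) y :=
  (((hasStrictFDerivAt_norm_sq y).hasFDerivAt.const_add c).rpow_const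
    (Or.inl (by positivity))).const_mul A

lemma fderiv_const_mul_rpow_add_norm_sq_single {n : ℕ} (A α : ℝ) {c : ℝ} (hc : 0 < c)
    (j : Fin n) :
    (fun y : E n => fderiv ℝ (fun y : E n => A * (c + ‖y‖ ^ 2) ^ α) y
        (EuclideanSpace.single j 1))
      = fun y : E n => 2 * A * α * ((c + ‖y‖ ^ 2) ^ (α - 1) * y j) := by
  funext y
  rw [(hasFDerivAt_const_mul_rpow_add_norm_sq A α hc y).fderiv]
  simp only [smul_apply, coe_innerSL_apply, EuclideanSpace.inner_single_right, ringHom_apply,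
    one_mul, nsmul_eq_mul, Nat.cast_ofNat, smul_eq_mul]
  ring

lemma pd2_const_mul_rpow_add_norm_sq_diag {n : ℕ} (A α : ℝ) {c : ℝ} (hc : 0 < c)
    (i : Fin n) (x : E n) :
    pd2 (fun y : E n => A * (c + ‖y‖ ^ 2) ^ α) i i x
      = 2 * A * α * ((c + ‖x‖ ^ 2) ^ (α - 1)
          + 2 * (α - 1) * (c + ‖x‖ ^ 2) ^ (α - 2) * x i ^ 2) := by
  have hpow : HasFDerivAt (fun y : E n => (c + ‖y‖ ^ 2) ^ (α - 1))
      (((α - 1) * (c + ‖x‖ ^ 2) ^ (α - 2)) • (2 : ℕ) • innerSL ℝ x) x := by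
    simpa only [one_mul, one_smul, show α - 1 - 1 = α - 2 by ring] using
      hasFDerivAt_const_mul_rpow_add_norm_sq 1 (α - 1) hc x
  have hcoord : HasFDerivAt (fun y : E n => y i) (EuclideanSpace.proj (𝕜 := ℝ) i) x :=
    (EuclideanSpace.proj (𝕜 := ℝ) i).hasFDerivAt
  have hprod : HasFDerivAt (fun y : E n => 2 * A * α * ((c + ‖y‖ ^ 2) ^ (α - 1) * y i))
      ((2 * A * α) • ((c + ‖x‖ ^ 2) ^ (α - 1) • EuclideanSpace.proj (𝕜 := ℝ) i
        + x i • ((α - 1) * (c + ‖x‖ ^ 2) ^ (α - 2)) • (2 : ℕ) • innerSL ℝ x)) x :=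
    (hpow.mul hcoord).const_mul _
  rw [pd2, fderiv_const_mul_rpow_add_norm_sq_single A α hc i, hprod.fderiv]
  simp only [smul_add, add_apply, smul_apply, PiLp.proj_apply, PiLp.single_eq_same, smul_eq_mul,
    mul_one, coe_innerSL_apply, EuclideanSpace.inner_single_right, ringHom_apply, one_mul,
    nsmul_eq_mul, Nat.cast_ofNat]
  ring

lemma lap_const_mul_rpow_add_norm_sq {n : ℕ} (A α : ℝ) {c : ℝ} (hc : 0 < c) (x : E n) :
    lap (fun y : E n => A * (c + ‖y‖ ^ 2) ^ α) x
      = 2 * A * α * (n * (c + ‖x‖ ^ 2) ^ (α - 1)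
          + 2 * (α - 1) * (c + ‖x‖ ^ 2) ^ (α - 2) * ‖x‖ ^ 2) := by
  simp only [lap, pd2_const_mul_rpow_add_norm_sq_diag A α hc, mul_add, Finset.sum_add_distrib,
    ← Finset.mul_sum, Finset.sum_const, Finset.card_univ, Fintype.card_fin, nsmul_eq_mul,
    ← EuclideanSpace.real_norm_sq_eq]

lemma const_mul_rpow_add_norm_sq_le_lap {n : ℕ} {A α : ℝ} (hA : 0 ≤ A) (hα : 0 ≤ α) {c : ℝ}
    (hc : 0 < c) (x : E n) :
    2 * A * α * (n + 2 * min (α - 1) 0) * (c + ‖x‖ ^ 2) ^ (α - 1)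
      ≤ lap (fun y : E n => A * (c + ‖y‖ ^ 2) ^ α) x := by
  set w := c + ‖x‖ ^ 2
  have hw : 0 < w := by positivity
  have hsplit : w ^ (α - 1) = w ^ (α - 2) * w := by
    rw [← rpow_add_one hw.ne']; ring_nf
  have hradial : min (α - 1) 0 * w ≤ (α - 1) * ‖x‖ ^ 2 := by
    rcases le_total (α - 1) 0 with h | h
    · rw [min_eq_left h]
      exact mul_le_mul_of_nonpos_left (le_add_of_nonneg_left hc.le) h
    · rw [min_eq_right h, zero_mul]
      positivity
  rw [lap_const_mul_rpow_add_norm_sq A α hc, hsplit]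
  linarith [mul_le_mul_of_nonneg_left hradial (by positivity : 0 ≤ 4 * A * α * w ^ (α - 2))]

lemma deriv_const_mul_rpow_affine {A α a b t : ℝ} (ht : 0 < a + b * t) :
    deriv (fun s => A * (a + b * s) ^ α) t = A * α * b * (a + b * t) ^ (α - 1) := by
  have h : HasDerivAt (fun s => a + b * s) b t := by
    simpa using ((hasDerivAt_id t).const_mul b).const_add a
  rw [((h.rpow_const (Or.inl ht.ne')).const_mul A).deriv]
  ring

lemma const_mul_rpow_rpow_neg_le {A w α ν : ℝ} (hA : 0 ≤ A) (hw : 1 ≤ w)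
    (hα : 1 ≤ α * (1 + ν)) :
    (A * w ^ α) ^ (-ν) ≤ A ^ (-ν) * w ^ (α - 1) := by
  rw [mul_rpow hA (by positivity), ← rpow_mul (by positivity)]
  gcongr
  linarith [mul_add α 1 ν]

lemma rpow_neg_one_div_one_add_rpow_neg {K ν : ℝ} (hK : 0 < K) (hν : 1 + ν ≠ 0) :
    (K ^ (-(1 / (1 + ν)))) ^ (-ν) = K * K ^ (-(1 / (1 + ν))) := by
  rw [← rpow_mul hK.le, mul_comm K, ← rpow_add_one hK.ne']
  congr 1
  field_simp
  ring

lemma rpow_profile_subsolution {n : ℕ} {A α ν b t : ℝ} (hA : 0 < A) (hα : 0 ≤ α)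
    (hαν : 1 ≤ α * (1 + ν)) (hb : 0 ≤ b) (ht : 0 ≤ t)
    (hbal : A ^ (-ν) + A * α * b ≤ 2 * A * α * (n + 2 * min (α - 1) 0)) (x : E n) :
    0 ≤ lap (fun y => A * (1 + ‖y‖ ^ 2 + b * t) ^ α) x - (A * (1 + ‖x‖ ^ 2 + b * t) ^ α) ^ (-ν)
      - deriv (fun s => A * (1 + ‖x‖ ^ 2 + b * s) ^ α) t := by
  set c := 1 + b * t
  have hc : 1 ≤ c := by simp only [c, le_add_iff_nonneg_right]; positivity
  have hw : 1 + ‖x‖ ^ 2 + b * t = c + ‖x‖ ^ 2 := add_right_comm _ _ _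
  have hw1 : 1 ≤ c + ‖x‖ ^ 2 := hc.trans (le_add_of_nonneg_right (by positivity))
  have hlap := const_mul_rpow_add_norm_sq_le_lap hA.le hα (by linarith : 0 < c) x
  have hreact := const_mul_rpow_rpow_neg_le (ν := ν) hA.le hw1 hαν
  have hdt := deriv_const_mul_rpow_affine (A := A) (α := α) (b := b)
    (by rw [hw]; linarith : 0 < 1 + ‖x‖ ^ 2 + b * t)
  rw [show (fun y => A * (1 + ‖y‖ ^ 2 + b * t) ^ α) = fun y => A * (c + ‖y‖ ^ 2) ^ α from
      funext fun y => by rw [add_right_comm], hdt, hw]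
  have hW : 0 ≤ (c + ‖x‖ ^ 2) ^ (α - 1) := by positivity
  linarith [mul_le_mul_of_nonneg_right hbal hW]

/-- `ψ₁(x,t) = A₁(1+|x|²+b₁t)^{α₁}` is a subsolution of `u_t = Δu - u^{-ν}`. -/
theorem psi1_subsolution (n : ℕ) (hn : 1 ≤ n) (ν α₁ ε A₁ b₁ : ℝ) (hν : 0 < ν)
    (hα₁ : 1 / (1 + ν) ≤ α₁) (hdim : 0 < (n : ℝ) + 2 * α₁ - 2)
    (hε : 0 < ε) (hε1 : ε < 1)
    (hA₁ : α₁ ≤ 1 →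
      A₁ = (2 * α₁ * (1 - ε) * ((n : ℝ) + 2 * α₁ - 2)) ^ (-(1 / (1 + ν))))
    (hA₁' : 1 < α₁ → A₁ = (2 * α₁ * (1 - ε) * n) ^ (-(1 / (1 + ν))))
    (hb₁ : α₁ ≤ 1 → b₁ = 2 * ((n : ℝ) + 2 * α₁ - 2) * ε)
    (hb₁' : 1 < α₁ → b₁ = 2 * ε * n)
    (ψ₁ : E n → ℝ → ℝ)
    (hψ₁ : ∀ (x : E n) (t : ℝ), ψ₁ x t = A₁ * (1 + ‖x‖ ^ 2 + b₁ * t) ^ α₁) :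
    ∀ (x : E n) (t : ℝ), 0 < t →
      0 ≤ lap (fun y => ψ₁ y t) x - ψ₁ x t ^ (-ν) - deriv (ψ₁ x) t := by
  intro x t ht
  set m : ℝ := n + 2 * min (α₁ - 1) 0
  obtain ⟨hm, hA, hb⟩ : 0 < m ∧ A₁ = (2 * α₁ * (1 - ε) * m) ^ (-(1 / (1 + ν)))
      ∧ b₁ = 2 * ε * m := by
    rcases le_or_gt α₁ 1 with h | h
    · have hm_eq : m = n + 2 * α₁ - 2 := by
        simp only [m, min_eq_left (by linarith : α₁ - 1 ≤ 0)]; ring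
      exact hm_eq ▸ ⟨hdim, hA₁ h, by rw [hb₁ h]; ring⟩
    · have hm_eq : m = n := by
        simp only [m, min_eq_right (by linarith : 0 ≤ α₁ - 1), mul_zero, add_zero]
      exact hm_eq ▸ ⟨by exact_mod_cast hn, hA₁' h, hb₁' h⟩
  have hν1 : 0 < 1 + ν := by linarith
  have hα : 0 < α₁ := (by positivity : (0 : ℝ) < 1 / (1 + ν)).trans_le hα₁
  have hK : 0 < 2 * α₁ * (1 - ε) * m := by have := sub_pos.2 hε1; positivity
  have hbal : A₁ ^ (-ν) + A₁ * α₁ * b₁ ≤ 2 * A₁ * α₁ * m := by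
    rw [hA, rpow_neg_one_div_one_add_rpow_neg hK hν1.ne', hb]
    exact le_of_eq (by ring)
  obtain rfl : ψ₁ = fun y s => A₁ * (1 + ‖y‖ ^ 2 + b₁ * s) ^ α₁ := funext₂ hψ₁
  exact rpow_profile_subsolution (hA ▸ rpow_pos_of_pos hK _) hα.le ((div_le_iff₀ hν1).1 hα₁)
    (hb ▸ by positivity) ht.le hbal x
end
end

section
/- Let n ≥ 1, ν > 0, let α₂ ≥ 1/(1+ν) and A₂ > 0, and set b₂ = 2n if α₂ ≤ 1 and b₂ = 2(n+2α₂−2) if α₂ > 1. Define ψ₂(x,t) = A₂(1+|x|²+b₂t)^{α₂}. Then Δψ₂(x,t) − ψ₂(x,t)^{−ν} − ∂ψ₂/∂t(x,t) ≤ 0 for all (x,t) ∈ ℝⁿ × (0,∞); i.e., ψ₂ is a supersolution of u_t = Δu − u^{−ν} on ℝⁿ × (0,∞). -/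
/-!
With `w = 1 + ‖x‖² + b₂t > 0`, the chain rule gives
`Δψ₂ - ∂ₜψ₂ = A₂α₂ w^(α₂-2) ((2n - b₂) w + 4(α₂-1)‖x‖²)`.
The choice of `b₂` makes the bracket `4(α₂-1)‖x‖²` when `α₂ ≤ 1` and `-4(α₂-1)(1 + b₂t)`
when `α₂ > 1`, both `≤ 0`; the prefactor is `≥ 0` because `α₂ ≥ 1/(1+ν) > 0`, and the
absorption term `-ψ₂^(-ν)` only helps.
-/

open MeasureTheory Real Set Filter Topology Metric

noncomputable section

section RpowNormSqAdd

variable {F : Type*} [NormedAddCommGroup F] [InnerProductSpace ℝ F] (A p : ℝ) {c : ℝ}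

theorem hasFDerivAt_rpow_norm_sq_add (hc : 0 < c) (x : F) :
    HasFDerivAt (fun y : F => (‖y‖ ^ 2 + c) ^ p)
      ((p * (‖x‖ ^ 2 + c) ^ (p - 1)) • (2 • innerSL ℝ x)) x :=
  ((hasStrictFDerivAt_norm_sq x).hasFDerivAt.add_const c).rpow_const (Or.inl (by positivity))

theorem fderiv_const_mul_rpow_norm_sq_add_apply (hc : 0 < c) (x v : F) :
    fderiv ℝ (fun y : F => A * (‖y‖ ^ 2 + c) ^ p) x v
      = 2 * A * p * ((‖x‖ ^ 2 + c) ^ (p - 1) * inner ℝ v x) := by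
  rw [((hasFDerivAt_rpow_norm_sq_add p hc x).const_mul A).fderiv]
  simp [real_inner_comm]
  ring

theorem fderiv_fderiv_const_mul_rpow_norm_sq_add_apply (hc : 0 < c) (x v : F) :
    fderiv ℝ (fun y => fderiv ℝ (fun z : F => A * (‖z‖ ^ 2 + c) ^ p) y v) x v
      = 2 * A * p * ((‖x‖ ^ 2 + c) ^ (p - 1) * ‖v‖ ^ 2
          + 2 * (p - 1) * (‖x‖ ^ 2 + c) ^ (p - 2) * inner ℝ v x ^ 2) := by
  simp_rw [fderiv_const_mul_rpow_norm_sq_add_apply A p hc]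
  have hinner : HasFDerivAt (fun y : F => inner ℝ v y) (innerSL ℝ v) x :=
    (innerSL ℝ v).hasFDerivAt
  have h : HasFDerivAt (fun y => 2 * A * p * ((‖y‖ ^ 2 + c) ^ (p - 1) * inner ℝ v y)) _ x :=
    ((hasFDerivAt_rpow_norm_sq_add (p - 1) hc x).mul hinner).const_mul _
  rw [h.fderiv]
  simp [real_inner_comm]
  rw [show p - 1 - 1 = p - 2 by ring]
  ring

end RpowNormSqAdd

theorem pd2_const_mul_rpow_norm_sq_add {n : ℕ} (A p : ℝ) {c : ℝ} (hc : 0 < c) (x : E n)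
    (j : Fin n) :
    pd2 (fun y : E n => A * (‖y‖ ^ 2 + c) ^ p) j j x
      = 2 * A * p * ((‖x‖ ^ 2 + c) ^ (p - 1)
          + 2 * (p - 1) * (‖x‖ ^ 2 + c) ^ (p - 2) * x j ^ 2) := by
  rw [pd2, fderiv_fderiv_const_mul_rpow_norm_sq_add_apply A p hc]
  simp [EuclideanSpace.inner_single_left]

theorem lap_const_mul_rpow_norm_sq_add {n : ℕ} (A p : ℝ) {c : ℝ} (hc : 0 < c) (x : E n) :
    lap (fun y : E n => A * (‖y‖ ^ 2 + c) ^ p) x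
      = 2 * A * p * (n * (‖x‖ ^ 2 + c) ^ (p - 1)
          + 2 * (p - 1) * (‖x‖ ^ 2 + c) ^ (p - 2) * ‖x‖ ^ 2) := by
  simp only [lap, pd2_const_mul_rpow_norm_sq_add A p hc, mul_add, Finset.sum_add_distrib,
    ← Finset.mul_sum, Finset.sum_const, Finset.card_univ, Fintype.card_fin, nsmul_eq_mul,
    ← EuclideanSpace.real_norm_sq_eq]

theorem deriv_const_mul_rpow_add_mul (A K b p t : ℝ) (h : K + b * t ≠ 0) :
    deriv (fun s => A * (K + b * s) ^ p) t = A * b * p * (K + b * t) ^ (p - 1) := by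
  have hlin : HasDerivAt (fun s => K + b * s) b t := by
    simpa using ((hasDerivAt_id t).const_mul b).const_add K
  rw [((hlin.rpow_const (Or.inl h)).const_mul A).deriv]
  ring

theorem lap_sub_deriv_const_mul_rpow_one_add_norm_sq_add_mul {n : ℕ} (A b p t : ℝ) (x : E n)
    (hc : 0 < 1 + b * t) :
    lap (fun y : E n => A * (1 + ‖y‖ ^ 2 + b * t) ^ p) x
        - deriv (fun s => A * (1 + ‖x‖ ^ 2 + b * s) ^ p) t
      = A * p * (1 + ‖x‖ ^ 2 + b * t) ^ (p - 2)
          * ((2 * n - b) * (1 + ‖x‖ ^ 2 + b * t) + 4 * (p - 1) * ‖x‖ ^ 2) := by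
  have hw : 0 < 1 + ‖x‖ ^ 2 + b * t := by linarith [sq_nonneg ‖x‖]
  rw [deriv_const_mul_rpow_add_mul A (1 + ‖x‖ ^ 2) b p t hw.ne']
  simp only [show ∀ y : E n, 1 + ‖y‖ ^ 2 + b * t = ‖y‖ ^ 2 + (1 + b * t) from fun y => by ring]
    at hw ⊢
  rw [lap_const_mul_rpow_norm_sq_add A p hc, show p - 1 = (p - 2) + 1 by ring,
    Real.rpow_add_one hw.ne']
  ring

theorem two_mul_sub_mul_add_four_mul_nonpos (n α b s c : ℝ) (hs : 0 ≤ s) (hc : 0 ≤ c)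
    (hb : α ≤ 1 → b = 2 * n) (hb' : 1 < α → b = 2 * (n + 2 * α - 2)) :
    (2 * n - b) * (s + c) + 4 * (α - 1) * s ≤ 0 := by
  rcases le_or_gt α 1 with hα | hα
  · rw [hb hα]; nlinarith
  · rw [hb' hα]; nlinarith

theorem psi2_supersolution_general (n : ℕ) (ν α₂ A₂ b₂ : ℝ) (hν : 0 < ν)
    (hα₂ : 1 / (1 + ν) ≤ α₂) (hA₂ : 0 < A₂)
    (hb₂ : α₂ ≤ 1 → b₂ = 2 * n)
    (hb₂' : 1 < α₂ → b₂ = 2 * ((n : ℝ) + 2 * α₂ - 2))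
    (ψ₂ : E n → ℝ → ℝ)
    (hψ₂ : ∀ (x : E n) (t : ℝ), ψ₂ x t = A₂ * (1 + ‖x‖ ^ 2 + b₂ * t) ^ α₂) :
    ∀ (x : E n) (t : ℝ), 0 < t →
      lap (fun y => ψ₂ y t) x - ψ₂ x t ^ (-ν) - deriv (ψ₂ x) t ≤ 0 := by
  intro x t ht
  obtain rfl : ψ₂ = fun y s => A₂ * (1 + ‖y‖ ^ 2 + b₂ * s) ^ α₂ := funext₂ hψ₂
  have hα₂_pos : 0 < α₂ := (one_div_pos.2 (by linarith)).trans_le hα₂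
  have hb₂_nonneg : 0 ≤ b₂ := by
    rcases le_or_gt α₂ 1 with h | h
    · rw [hb₂ h]; positivity
    · rw [hb₂' h]; linarith [(n.cast_nonneg : (0 : ℝ) ≤ n)]
  have hc : 0 < 1 + b₂ * t := by positivity
  have hdiff := lap_sub_deriv_const_mul_rpow_one_add_norm_sq_add_mul A₂ b₂ α₂ t x hc
  have hcoeff := two_mul_sub_mul_add_four_mul_nonpos n α₂ b₂ (‖x‖ ^ 2) (1 + b₂ * t)
    (by positivity) hc.le hb₂ hb₂'
  have hmain : A₂ * α₂ * (1 + ‖x‖ ^ 2 + b₂ * t) ^ (α₂ - 2)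
      * ((2 * n - b₂) * (1 + ‖x‖ ^ 2 + b₂ * t) + 4 * (α₂ - 1) * ‖x‖ ^ 2) ≤ 0 :=
    mul_nonpos_of_nonneg_of_nonpos (by positivity) (by linarith)
  have habsorb : 0 ≤ (A₂ * (1 + ‖x‖ ^ 2 + b₂ * t) ^ α₂) ^ (-ν) := by positivity
  linarith

/-- `ψ₂(x,t) = A₂(1+|x|²+b₂t)^{α₂}` is a supersolution of `u_t = Δu - u^{-ν}`. -/
theorem psi2_supersolution (n : ℕ) (hn : 1 ≤ n) (ν α₂ A₂ b₂ : ℝ) (hν : 0 < ν)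
    (hα₂ : 1 / (1 + ν) ≤ α₂) (hA₂ : 0 < A₂)
    (hb₂ : α₂ ≤ 1 → b₂ = 2 * n)
    (hb₂' : 1 < α₂ → b₂ = 2 * ((n : ℝ) + 2 * α₂ - 2))
    (ψ₂ : E n → ℝ → ℝ)
    (hψ₂ : ∀ (x : E n) (t : ℝ), ψ₂ x t = A₂ * (1 + ‖x‖ ^ 2 + b₂ * t) ^ α₂) :
    ∀ (x : E n) (t : ℝ), 0 < t →
      lap (fun y => ψ₂ y t) x - ψ₂ x t ^ (-ν) - deriv (ψ₂ x) t ≤ 0 :=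
  psi2_supersolution_general n ν α₂ A₂ b₂ hν hα₂ hA₂ hb₂ hb₂' ψ₂ hψ₂
end
end

section
/- Let n ≥ 1, 0 < ν ≤ 1, 0 < β ≤ 1/(1+ν) and T > 0. Define A₃ = (1+ν)^{1/(1+ν)} if 0 < β ≤ min((n−2)/2, 1/(1+ν)), and A₃ = ((1+ν)/(1 + 2β(1+ν)(2β+2−n)T))^{1/(1+ν)} if (n−2)/2 < β ≤ 1/(1+ν). Define ψ₃(x,t) = A₃(T−t)^{1/(1+ν)}(1+|x|²)^{−β}. Then Δψ₃(x,t) − ψ₃(x,t)^{−ν} − ∂ψ₃/∂t(x,t) ≤ 0 for all (x,t) ∈ ℝⁿ × (0,T); i.e., ψ₃ is a supersolution of u_t = Δu − u^{−ν} on ℝⁿ × (0,T). -/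
open MeasureTheory Real Set Filter Topology Metric

noncomputable section

/-! With `s = T - t`, `a = 1/(1+ν)`, `h = 1 + |x|²` and `K = 2β + 2 - n`, the three terms separate:
`Δψ₃ = A₃ sᵃ · 2β h^{-β-2} (K|x|² - n) ≤ A₃ sᵃ · 2β K⁺`, `ψ₃^{-ν} = A₃^{-ν} sᵃ/s · h^{βν}` and
`-∂ₜψ₃ = a A₃ sᵃ/s · h^{-β}`. Both choices of `A₃` are exactly the ones making
`A₃^{-ν} = A₃ (a + 2βK⁺T)`, so after dividing by `A₃ sᵃ/s` the claim becomes
`s · 2βK⁺ + a h^{-β} ≤ (a + 2βK⁺T) h^{βν}`, which holds as `s ≤ T` and `h^{-β} ≤ 1 ≤ h^{βν}`. -/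

lemma lap_const_mul {n : ℕ} (c : ℝ) (f : E n → ℝ) (x : E n) :
    lap (fun y => c * f y) x = c * lap f x := by
  have hpartial : ∀ (g : E n → ℝ) (y v : E n),
      fderiv ℝ (fun z => c * g z) y v = c * fderiv ℝ g y v := by
    intro g y v
    rw [show (fun z => c * g z) = c • g from rfl, fderiv_const_smul_field]
    rfl
  simp only [lap, pd2, hpartial, Finset.mul_sum]

lemma hasFDerivAt_one_add_norm_sq_rpow {F : Type*} [NormedAddCommGroup F] [InnerProductSpace ℝ F]
    (p : ℝ) (x : F) :
    HasFDerivAt (fun y : F => (1 + ‖y‖ ^ 2) ^ p)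
      ((2 * p * (1 + ‖x‖ ^ 2) ^ (p - 1)) • innerSL ℝ x) x := by
  have hbase : HasFDerivAt (fun y : F => 1 + ‖y‖ ^ 2) ((2 : ℕ) • innerSL ℝ x) x := by
    simpa using (hasFDerivAt_id x).norm_sq.const_add 1
  refine (hbase.rpow_const (Or.inl (by positivity))).congr_fderiv ?_
  ext v
  simp
  ring

lemma fderiv_one_add_norm_sq_rpow_single {n : ℕ} (p : ℝ) (x : E n) (i : Fin n) :
    fderiv ℝ (fun y : E n => (1 + ‖y‖ ^ 2) ^ p) x (EuclideanSpace.single i 1)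
      = 2 * p * ((1 + ‖x‖ ^ 2) ^ (p - 1) * x i) := by
  rw [(hasFDerivAt_one_add_norm_sq_rpow p x).fderiv]
  simp [EuclideanSpace.inner_single_right]
  ring

lemma pd2_one_add_norm_sq_rpow {n : ℕ} (p : ℝ) (x : E n) (i : Fin n) :
    pd2 (fun y : E n => (1 + ‖y‖ ^ 2) ^ p) i i x
      = 2 * p * (2 * (p - 1) * (1 + ‖x‖ ^ 2) ^ (p - 2) * x i ^ 2 + (1 + ‖x‖ ^ 2) ^ (p - 1)) := by
  have hpartial : HasFDerivAt (fun y : E n => 2 * p * ((1 + ‖y‖ ^ 2) ^ (p - 1) * y i)) _ x :=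
    ((hasFDerivAt_one_add_norm_sq_rpow (p - 1) x).mul
      (EuclideanSpace.proj (𝕜 := ℝ) i).hasFDerivAt).const_mul (2 * p)
  rw [pd2, funext (fderiv_one_add_norm_sq_rpow_single p · i), hpartial.fderiv]
  simp [EuclideanSpace.inner_single_right]
  ring_nf

lemma lap_one_add_norm_sq_rpow {n : ℕ} (p : ℝ) (x : E n) :
    lap (fun y : E n => (1 + ‖y‖ ^ 2) ^ p) x
      = 2 * p * (1 + ‖x‖ ^ 2) ^ (p - 2) * ((2 * p - 2 + n) * ‖x‖ ^ 2 + n) := by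
  have hsq : ∑ i, x i ^ 2 = ‖x‖ ^ 2 := by simp [EuclideanSpace.norm_sq_eq]
  have hpow : (1 + ‖x‖ ^ 2) ^ (p - 1) = (1 + ‖x‖ ^ 2) ^ (p - 2) * (1 + ‖x‖ ^ 2) := by
    rw [← Real.rpow_add_one (by positivity)]; ring_nf
  simp only [lap, pd2_one_add_norm_sq_rpow, Finset.sum_add_distrib, ← Finset.mul_sum, hsq,
    Finset.sum_const, Finset.card_univ, Fintype.card_fin, nsmul_eq_mul, hpow]
  ring

lemma hasDerivAt_sub_rpow {T t : ℝ} (a : ℝ) (ht : t < T) :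
    HasDerivAt (fun r => (T - r) ^ a) (-(a * ((T - t) ^ a / (T - t)))) t := by
  have h := ((hasDerivAt_id' t).const_sub T).rpow_const (p := a) (Or.inl (sub_ne_zero.2 ht.ne'))
  rw [Real.rpow_sub_one (sub_ne_zero.2 ht.ne')] at h
  convert h using 1
  ring

lemma rpow_one_div_one_add_rpow_neg {c ν : ℝ} (hc : 0 < c) (hν : 0 < 1 + ν) :
    (c ^ (1 / (1 + ν))) ^ (-ν) = c ^ (1 / (1 + ν)) / c := by
  rw [← Real.rpow_mul hc.le, show 1 / (1 + ν) * -ν = 1 / (1 + ν) - 1 by field_simp; ring,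
    Real.rpow_sub_one hc.ne']

lemma one_add_rpow_neg_mul_le_one {r q : ℝ} (hr : 0 ≤ r) (hq : 1 ≤ q) :
    (1 + r) ^ (-q) * r ≤ 1 :=
  calc (1 + r) ^ (-q) * r ≤ (1 + r) ^ (-q) * (1 + r) := by gcongr; linarith
    _ = (1 + r) ^ (-q + 1) := (Real.rpow_add_one (by positivity) _).symm
    _ ≤ 1 := Real.rpow_le_one_of_one_le_of_nonpos (by linarith) (by linarith)

lemma laplacian_profile_le {β n r : ℝ} (hβ : 0 < β) (hn : 0 ≤ n) (hr : 0 ≤ r) :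
    2 * -β * (1 + r) ^ (-β - 2) * ((2 * -β - 2 + n) * r + n) ≤ 2 * β * max (2 * β + 2 - n) 0 := by
  set u := (1 + r) ^ (-β - 2) * r
  have hu0 : 0 ≤ u := by positivity
  have hu1 : u ≤ 1 := by
    simpa [u, show -β - 2 = -(β + 2) by ring] using
      one_add_rpow_neg_mul_le_one hr (by linarith : (1 : ℝ) ≤ β + 2)
  have hKu : (2 * β + 2 - n) * u ≤ max (2 * β + 2 - n) 0 :=
    calc (2 * β + 2 - n) * u ≤ max (2 * β + 2 - n) 0 * u := by gcongr; exact le_max_left _ _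
      _ ≤ max (2 * β + 2 - n) 0 := mul_le_of_le_one_right (le_max_right _ _) hu1
  have hnu : 0 ≤ n * (1 + r) ^ (-β - 2) := by positivity
  nlinarith

lemma amplitude_pos_and_rpow_neg {n ν β T A : ℝ} (hν : 0 < ν) (hβ : 0 < β) (hT : 0 < T)
    (hA : β ≤ (n - 2) / 2 → A = (1 + ν) ^ (1 / (1 + ν)))
    (hA' : (n - 2) / 2 < β →
      A = ((1 + ν) / (1 + 2 * β * (1 + ν) * (2 * β + 2 - n) * T)) ^ (1 / (1 + ν))) :
    0 < A ∧ A ^ (-ν) = A * (1 / (1 + ν) + 2 * β * max (2 * β + 2 - n) 0 * T) := by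
  have hν' : 0 < 1 + ν := by linarith
  rcases le_or_gt β ((n - 2) / 2) with hle | hlt
  · have hK : max (2 * β + 2 - n) 0 = 0 := max_eq_right (by linarith)
    rw [hA hle, hK, rpow_one_div_one_add_rpow_neg hν' hν']
    exact ⟨by positivity, by field_simp; ring⟩
  · have hK : max (2 * β + 2 - n) 0 = 2 * β + 2 - n := max_eq_left (by linarith)
    have hD : 0 < 1 + 2 * β * (1 + ν) * (2 * β + 2 - n) * T := by
      have : 0 < 2 * β + 2 - n := by linarith
      positivity
    have hc : 0 < (1 + ν) / (1 + 2 * β * (1 + ν) * (2 * β + 2 - n) * T) := by positivity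
    rw [hA' hlt, hK, rpow_one_div_one_add_rpow_neg hc hν']
    exact ⟨by positivity, by field_simp⟩

lemma supersolution_of_bounds {A S s T a M L h β ν : ℝ} (hA : 0 < A) (hS : 0 < S) (hs : 0 < s)
    (hsT : s ≤ T) (ha : 0 ≤ a) (hM : 0 ≤ M) (hL : L ≤ M) (hh : 1 ≤ h) (hβ : 0 ≤ β)
    (hν : 0 ≤ ν) :
    A * S * L - A * (a + M * T) * (S / s) * h ^ (β * ν) - -(A * a * (S / s) * h ^ (-β)) ≤ 0 := by
  have hT : 0 ≤ T := hs.le.trans hsT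
  have hdecay : h ^ (-β) ≤ 1 := Real.rpow_le_one_of_one_le_of_nonpos hh (by linarith)
  have hgrowth : 1 ≤ h ^ (β * ν) := Real.one_le_rpow hh (by positivity)
  have hsL : s * L ≤ T * M := by nlinarith
  have hbracket : s * L - (a + M * T) * h ^ (β * ν) + a * h ^ (-β) ≤ 0 := by
    nlinarith [mul_le_mul_of_nonneg_left hdecay ha,
      mul_le_mul_of_nonneg_left hgrowth (by positivity : 0 ≤ a + M * T)]
  have hfactor : A * S * L - A * (a + M * T) * (S / s) * h ^ (β * ν) - -(A * a * (S / s) * h ^ (-β))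
      = A * (S / s) * (s * L - (a + M * T) * h ^ (β * ν) + a * h ^ (-β)) := by
    field_simp
    ring
  rw [hfactor]
  exact mul_nonpos_of_nonneg_of_nonpos (by positivity) hbracket

theorem psi3_supersolution_general (n : ℕ) (ν β T A₃ : ℝ)
    (hν : 0 < ν) (hβ : 0 < β) (hβ' : β ≤ 1 / (1 + ν)) (hT : 0 < T)
    (hA₃ : β ≤ min (((n : ℝ) - 2) / 2) (1 / (1 + ν)) →
      A₃ = (1 + ν) ^ (1 / (1 + ν)))
    (hA₃' : ((n : ℝ) - 2) / 2 < β →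
      A₃ = ((1 + ν) / (1 + 2 * β * (1 + ν) * (2 * β + 2 - n) * T)) ^ (1 / (1 + ν)))
    (ψ₃ : E n → ℝ → ℝ)
    (hψ₃ : ∀ (x : E n) (t : ℝ),
      ψ₃ x t = A₃ * (T - t) ^ (1 / (1 + ν)) * (1 + ‖x‖ ^ 2) ^ (-β)) :
    ∀ (x : E n), ∀ t ∈ Ioo (0 : ℝ) T,
      lap (fun y => ψ₃ y t) x - ψ₃ x t ^ (-ν) - deriv (ψ₃ x) t ≤ 0 := by
  rintro x t ⟨ht0, htT⟩
  obtain ⟨hA, hAν⟩ := amplitude_pos_and_rpow_neg hν hβ hT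
    (fun hle => hA₃ (le_min hle hβ')) hA₃'
  have hs : 0 < T - t := sub_pos.2 htT
  have hlap : lap (fun y => ψ₃ y t) x = A₃ * (T - t) ^ (1 / (1 + ν)) *
      (2 * -β * (1 + ‖x‖ ^ 2) ^ (-β - 2) * ((2 * -β - 2 + n) * ‖x‖ ^ 2 + n)) := by
    simp only [hψ₃]
    rw [lap_const_mul, lap_one_add_norm_sq_rpow]
  have hpow : ψ₃ x t ^ (-ν) = A₃ * (1 / (1 + ν) + 2 * β * max (2 * β + 2 - n) 0 * T) *
      ((T - t) ^ (1 / (1 + ν)) / (T - t)) * (1 + ‖x‖ ^ 2) ^ (β * ν) := by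
    rw [hψ₃, Real.mul_rpow (by positivity) (by positivity), Real.mul_rpow hA.le (by positivity),
      hAν, rpow_one_div_one_add_rpow_neg hs (by linarith), ← Real.rpow_mul (by positivity),
      neg_mul_neg]
  have hderiv : deriv (ψ₃ x) t
      = -(A₃ * (1 / (1 + ν)) * ((T - t) ^ (1 / (1 + ν)) / (T - t)) * (1 + ‖x‖ ^ 2) ^ (-β)) := by
    rw [funext (hψ₃ x), (((hasDerivAt_sub_rpow _ htT).const_mul A₃).mul_const _).deriv]
    ring
  rw [hlap, hpow, hderiv]
  exact supersolution_of_bounds hA (by positivity) hs (by linarith) (by positivity)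
    (by positivity) (laplacian_profile_le hβ n.cast_nonneg (by positivity))
    (by simp) hβ.le hν.le

/-- `ψ₃(x,t) = A₃(T-t)^{1/(1+ν)}(1+|x|²)^{-β}` is a supersolution of
`u_t = Δu - u^{-ν}` on `ℝⁿ × (0,T)`. -/
theorem psi3_supersolution (n : ℕ) (hn : 1 ≤ n) (ν β T A₃ : ℝ)
    (hν : 0 < ν) (hν1 : ν ≤ 1) (hβ : 0 < β) (hβ' : β ≤ 1 / (1 + ν)) (hT : 0 < T)
    (hA₃ : β ≤ min (((n : ℝ) - 2) / 2) (1 / (1 + ν)) →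
      A₃ = (1 + ν) ^ (1 / (1 + ν)))
    (hA₃' : ((n : ℝ) - 2) / 2 < β →
      A₃ = ((1 + ν) / (1 + 2 * β * (1 + ν) * (2 * β + 2 - n) * T)) ^ (1 / (1 + ν)))
    (ψ₃ : E n → ℝ → ℝ)
    (hψ₃ : ∀ (x : E n) (t : ℝ),
      ψ₃ x t = A₃ * (T - t) ^ (1 / (1 + ν)) * (1 + ‖x‖ ^ 2) ^ (-β)) :
    ∀ (x : E n), ∀ t ∈ Ioo (0 : ℝ) T,
      lap (fun y => ψ₃ y t) x - ψ₃ x t ^ (-ν) - deriv (ψ₃ x) t ≤ 0 :=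
  psi3_supersolution_general n ν β T A₃ hν hβ hβ' hT hA₃ hA₃' ψ₃ hψ₃
end
end
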